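/- Consider Gauss–Seidel waveform relaxation for the coupled linear system x' = a x + b y + f, y' = c x + d y + g on [0, T], where each sweep solves the first equation exactly using the previous iterate of y and then the second equation exactly using the new x. The error vectors e_x^{(k)} = x^{(k)} − x, e_y^{(k)} = y^{(k)} − y satisfy ‖(e_x^{(k)}, e_y^{(k)})‖_∞ ≤ (C T)^k / k! · ‖(e_x^{(0)}, e_y^{(0)})‖_∞ for a constant C depending only on a, b, c, d, and T; hence the iteration converges uniformly on [0, T]. -/

import Mathlib

/-!
The errors `eₓ = X - x`, `e_y = Y - y` of a sweep satisfy `eₓ⁽ᵏ⁺¹⁾ = ∫₀ᵗ (a eₓ⁽ᵏ⁺¹⁾ + b e_y⁽ᵏ⁾)` and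
`e_y⁽ᵏ⁺¹⁾ = ∫₀ᵗ (c eₓ⁽ᵏ⁺¹⁾ + d e_y⁽ᵏ⁾)`. If `|e_y⁽ᵏ⁾| ≤ m`, Grönwall's inequality in integral form
bounds `|eₓ⁽ᵏ⁺¹⁾(t)|` by a multiple of `∫₀ᵗ m`, and hence `|e_y⁽ᵏ⁺¹⁾(t)|` as well. Since
`C ∫₀ᵗ B (C s)ᵏ / k! ds = B (C t)ᵏ⁺¹ / (k+1)!`, the bound `B (C t)ᵏ / k!` propagates by induction.
-/

open Set intervalIntegral MeasureTheory Real Topology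

theorem ContinuousOn.intervalIntegrable_of_mem_Icc {u : ℝ → ℝ} {a b t : ℝ}
    (hu : ContinuousOn u (Icc a b)) (ht : t ∈ Icc a b) : IntervalIntegrable u volume a t :=
  (hu.mono (Icc_subset_Icc_right ht.2)).intervalIntegrable_of_Icc ht.1

theorem le_mul_exp_of_le_add_integral {u : ℝ → ℝ} {δ K a b : ℝ} (hK : 0 ≤ K)
    (hu : ContinuousOn u (Icc a b)) (h : ∀ t ∈ Icc a b, u t ≤ δ + K * ∫ s in a..t, u s) :
    ∀ t ∈ Icc a b, u t ≤ δ * exp (K * (t - a)) := by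
  intro t ht
  have hab : a ≤ b := ht.1.trans ht.2
  set w : ℝ → ℝ := fun t => δ + K * ∫ s in a..t, u s
  have hw : ContinuousOn w (Icc a b) := by
    have := continuousOn_primitive_interval (μ := volume)
      (by rw [uIcc_of_le hab]; exact hu.integrableOn_Icc)
    rw [uIcc_of_le hab] at this
    exact continuousOn_const.add (continuousOn_const.mul this)
  have hw' : ∀ s ∈ Ico a b, HasDerivWithinAt w (K * u s) (Ici s) s := by
    intro s hs
    have hmem : Icc a b ∈ 𝓝[>] s := Icc_mem_nhdsGT_of_mem hs
    exact ((integral_hasDerivWithinAt_right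
      (hu.intervalIntegrable_of_mem_Icc (Ico_subset_Icc_self hs))
      ((hu.stronglyMeasurableAtFilter_nhdsWithin measurableSet_Icc s).filter_mono
        (nhdsWithin_le_of_mem hmem))
      ((hu s (Ico_subset_Icc_self hs)).mono_of_mem_nhdsWithin hmem)).const_mul K).const_add δ
  have hwb := le_gronwallBound_of_liminf_deriv_right_le (δ := δ) (K := K) (ε := 0) hw
    (fun s hs r hr => by simpa [slope_def_field, div_eq_inv_mul] using
      (hw' s hs).liminf_right_slope_le hr)
    (by simp [w]) (fun s hs => by
      simpa [w] using mul_le_mul_of_nonneg_left (h s (Ico_subset_Icc_self hs)) hK) t ht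
  rw [gronwallBound_ε0] at hwb
  exact (h t ht).trans hwb

theorem le_mul_exp_of_le_add_integral_of_monotoneOn {u Φ : ℝ → ℝ} {K a b : ℝ} (hK : 0 ≤ K)
    (hu : ContinuousOn u (Icc a b)) (hΦ : MonotoneOn Φ (Icc a b))
    (h : ∀ t ∈ Icc a b, u t ≤ Φ t + K * ∫ s in a..t, u s) :
    ∀ t ∈ Icc a b, u t ≤ Φ t * exp (K * (t - a)) := by
  intro t ht
  have hsub : Icc a t ⊆ Icc a b := Icc_subset_Icc_right ht.2
  refine le_mul_exp_of_le_add_integral hK (hu.mono hsub) (fun s hs => ?_) t ⟨ht.1, le_rfl⟩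
  grw [h s (hsub hs), hΦ (hsub hs) ht hs.2]

theorem monotoneOn_integral_of_nonneg {m : ℝ → ℝ} {a b : ℝ} (hm : ContinuousOn m (Icc a b))
    (hm0 : ∀ t ∈ Icc a b, 0 ≤ m t) : MonotoneOn (fun t => ∫ s in a..t, m s) (Icc a b) :=
  fun _ hs _ ht hst => integral_mono_interval le_rfl hs.1 hst
    ((ae_restrict_iff' measurableSet_Ioc).2 (ae_of_all _ fun r hr =>
      hm0 r ⟨hr.1.le, hr.2.trans ht.2⟩))
    (hm.intervalIntegrable_of_mem_Icc ht)

theorem abs_integral_add_mul_le {p q P Q : ℝ → ℝ} {α β t : ℝ} (ht : 0 ≤ t)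
    (hP : IntervalIntegrable P volume 0 t) (hQ : IntervalIntegrable Q volume 0 t)
    (hpP : ∀ s ∈ Icc 0 t, |p s| ≤ P s) (hqQ : ∀ s ∈ Icc 0 t, |q s| ≤ Q s) :
    |∫ s in 0..t, (α * p s + β * q s)| ≤ |α| * (∫ s in 0..t, P s) + |β| * ∫ s in 0..t, Q s := by
  rw [← intervalIntegral.integral_const_mul, ← intervalIntegral.integral_const_mul,
    ← integral_add (hP.const_mul _) (hQ.const_mul _), ← Real.norm_eq_abs]
  refine norm_integral_le_of_norm_le ht (ae_of_all _ fun s hs => ?_)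
    ((hP.const_mul _).add (hQ.const_mul _))
  rw [Real.norm_eq_abs]
  grw [abs_add_le, abs_mul, abs_mul, hpP s (Ioc_subset_Icc_self hs),
    hqQ s (Ioc_subset_Icc_self hs)]

section Sweep

variable {a b c d T : ℝ} {u v q m : ℝ → ℝ}

theorem abs_le_exp_mul_integral_of_eq_integral (hu : ContinuousOn u (Icc 0 T))
    (hm : ContinuousOn m (Icc 0 T)) (hm0 : ∀ t ∈ Icc 0 T, 0 ≤ m t)
    (hqm : ∀ t ∈ Icc 0 T, |q t| ≤ m t)
    (hu_eq : ∀ t ∈ Icc 0 T, u t = ∫ s in 0..t, (a * u s + b * q s)) :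
    ∀ t ∈ Icc 0 T, |u t| ≤ exp (|a| * T) * |b| * ∫ s in 0..t, m s := by
  have hI := monotoneOn_integral_of_nonneg hm hm0
  have hgronwall := le_mul_exp_of_le_add_integral_of_monotoneOn (abs_nonneg a) hu.abs
    (fun _ hs _ ht hst => mul_le_mul_of_nonneg_left (hI hs ht hst) (abs_nonneg b))
    (fun t ht => by
      rw [hu_eq t ht]
      have := abs_integral_add_mul_le (α := a) (β := b) ht.1
        (hu.abs.intervalIntegrable_of_mem_Icc ht) (hm.intervalIntegrable_of_mem_Icc ht)
        (fun _ _ => le_rfl) (fun s hs => hqm s ⟨hs.1, hs.2.trans ht.2⟩)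
      linarith)
  intro t ht
  have hI0 : 0 ≤ ∫ s in 0..t, m s :=
    integral_nonneg ht.1 fun s hs => hm0 s ⟨hs.1, hs.2.trans ht.2⟩
  calc |u t| ≤ |b| * (∫ s in 0..t, m s) * exp (|a| * (t - 0)) := hgronwall t ht
    _ ≤ |b| * (∫ s in 0..t, m s) * exp (|a| * T) := by gcongr; linarith [ht.2]
    _ = exp (|a| * T) * |b| * ∫ s in 0..t, m s := by ring

theorem abs_le_mul_integral_of_eq_integral {K : ℝ} (hK : 0 ≤ K)
    (hm : ContinuousOn m (Icc 0 T)) (hm0 : ∀ t ∈ Icc 0 T, 0 ≤ m t)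
    (hqm : ∀ t ∈ Icc 0 T, |q t| ≤ m t) (hu : ∀ t ∈ Icc 0 T, |u t| ≤ K * ∫ s in 0..t, m s)
    (hv_eq : ∀ t ∈ Icc 0 T, v t = ∫ s in 0..t, (c * u s + d * q s)) :
    ∀ t ∈ Icc 0 T, |v t| ≤ (T * |c| * K + |d|) * ∫ s in 0..t, m s := by
  intro t ht
  have hI := monotoneOn_integral_of_nonneg hm hm0
  have hI0 : 0 ≤ ∫ s in 0..t, m s :=
    integral_nonneg ht.1 fun s hs => hm0 s ⟨hs.1, hs.2.trans ht.2⟩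
  have hu_le : ∀ s ∈ Icc 0 t, |u s| ≤ K * ∫ r in 0..t, m r := fun s hs =>
    have hsT : s ∈ Icc 0 T := ⟨hs.1, hs.2.trans ht.2⟩
    (hu s hsT).trans (mul_le_mul_of_nonneg_left (hI hsT ht hs.2) hK)
  have hv := abs_integral_add_mul_le (α := c) (β := d) ht.1 intervalIntegrable_const
    (hm.intervalIntegrable_of_mem_Icc ht) hu_le (fun s hs => hqm s ⟨hs.1, hs.2.trans ht.2⟩)
  rw [intervalIntegral.integral_const, smul_eq_mul, sub_zero] at hv
  rw [hv_eq t ht]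
  refine hv.trans ?_
  have : t * |c| * K * (∫ s in 0..t, m s) ≤ T * |c| * K * ∫ s in 0..t, m s := by
    gcongr; exact ht.2
  linarith

end Sweep

theorem mul_integral_mul_pow_div_factorial (B C t : ℝ) (k : ℕ) :
    C * ∫ s in 0..t, B * (C * s) ^ k / k.factorial
      = B * (C * t) ^ (k + 1) / (k + 1).factorial := by
  simp only [mul_pow, intervalIntegral.integral_div, intervalIntegral.integral_const_mul,
    integral_pow, Nat.factorial_succ]
  push_cast
  field_simp
  ring

/-- The half-sweep for `x` (by Grönwall) contracts with factor `exp (|a| * T) * |b|` and the one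
for `y` with `T * |c| * exp (|a| * T) * |b| + |d|`; the constant dominates both. -/
noncomputable def gaussSeidelConstant (a b c d T : ℝ) : ℝ :=
  1 + exp (|a| * T) * |b| * (1 + T * |c|) + |d|

theorem gaussSeidelConstant_pos {a b c d T : ℝ} (hT : 0 ≤ T) :
    0 < gaussSeidelConstant a b c d T := by
  unfold gaussSeidelConstant; positivity

theorem gaussSeidel_error_le {a b c d T B : ℝ} (hT : 0 ≤ T) (hB0 : 0 ≤ B)
    {ex ey : ℕ → ℝ → ℝ} (hex : ∀ k, ContinuousOn (ex k) (Icc 0 T))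
    (hB : ∀ t ∈ Icc 0 T, |ex 0 t| ≤ B ∧ |ey 0 t| ≤ B)
    (hex_eq : ∀ k, ∀ t ∈ Icc 0 T, ex (k + 1) t = ∫ s in 0..t, (a * ex (k + 1) s + b * ey k s))
    (hey_eq : ∀ k, ∀ t ∈ Icc 0 T, ey (k + 1) t = ∫ s in 0..t, (c * ex (k + 1) s + d * ey k s))
    (k : ℕ) :
    ∀ t ∈ Icc 0 T, |ex k t| ≤ B * (gaussSeidelConstant a b c d T * t) ^ k / k.factorial ∧
      |ey k t| ≤ B * (gaussSeidelConstant a b c d T * t) ^ k / k.factorial := by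
  set C := gaussSeidelConstant a b c d T
  have hC : 0 < C := gaussSeidelConstant_pos hT
  induction k with
  | zero => simpa using hB
  | succ k ih =>
    set m : ℝ → ℝ := fun s => B * (C * s) ^ k / k.factorial
    have hm : ContinuousOn m (Icc 0 T) := by fun_prop
    have hm0 : ∀ s ∈ Icc 0 T, 0 ≤ m s := fun s hs => by have := hs.1; positivity
    set Kx := exp (|a| * T) * |b|
    have hx := abs_le_exp_mul_integral_of_eq_integral (hex (k + 1)) hm hm0
      (fun s hs => (ih s hs).2) (hex_eq k)
    have hy := abs_le_mul_integral_of_eq_integral (by positivity : 0 ≤ Kx) hm hm0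
      (fun s hs => (ih s hs).2) hx (hey_eq k)
    intro t ht
    have hI0 : 0 ≤ ∫ s in 0..t, m s :=
      integral_nonneg ht.1 fun s hs => hm0 s ⟨hs.1, hs.2.trans ht.2⟩
    rw [← mul_integral_mul_pow_div_factorial]
    have hC_eq : C = 1 + Kx + (T * |c| * Kx + |d|) := by
      simp only [C, Kx, gaussSeidelConstant]; ring
    have hKx : Kx ≤ C := by
      rw [hC_eq]; linarith [(by positivity : 0 ≤ T * |c| * Kx + |d|)]
    have hKy : T * |c| * Kx + |d| ≤ C := by
      rw [hC_eq]; linarith [(by positivity : 0 ≤ Kx)]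
    exact ⟨(hx t ht).trans (by gcongr), (hy t ht).trans (by gcongr)⟩

theorem sub_eq_integral_of_hasDerivAt {Z z P Q p q h : ℝ → ℝ} {α β T : ℝ}
    (hP : ContinuousOn P (Icc 0 T)) (hQ : ContinuousOn Q (Icc 0 T))
    (hp : ContinuousOn p (Icc 0 T)) (hq : ContinuousOn q (Icc 0 T))
    (hh : ContinuousOn h (Icc 0 T))
    (hZ : ∀ t ∈ Icc 0 T, Z t = z 0 + ∫ s in 0..t, (α * P s + β * Q s + h s))
    (hz : ∀ t ∈ Icc 0 T, HasDerivAt z (α * p t + β * q t + h t) t) :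
    ∀ t ∈ Icc 0 T, Z t - z t = ∫ s in 0..t, (α * (P s - p s) + β * (Q s - q s)) := by
  intro t ht
  have hF : ContinuousOn (fun s => α * P s + β * Q s + h s) (Icc 0 T) := by fun_prop
  have hf : ContinuousOn (fun s => α * p s + β * q s + h s) (Icc 0 T) := by fun_prop
  have hz_eq : z t = z 0 + ∫ s in 0..t, (α * p s + β * q s + h s) := by
    rw [integral_eq_sub_of_hasDerivAt (fun s hs => hz s ?_) (hf.intervalIntegrable_of_mem_Icc ht)]
    · ring
    · rw [uIcc_of_le ht.1] at hs; exact ⟨hs.1, hs.2.trans ht.2⟩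
  rw [hZ t ht, hz_eq, add_sub_add_left_eq_sub, ← integral_sub
    (hF.intervalIntegrable_of_mem_Icc ht) (hf.intervalIntegrable_of_mem_Icc ht)]
  congr 1 with s
  ring

/-- Superlinear convergence of Gauss–Seidel waveform relaxation for the coupled
    linear system x' = a x + b y + f, y' = c x + d y + g on [0, T]: there is a
    constant C depending only on a, b, c, d (and T) such that the sup-norm
    error after k sweeps is bounded by (C T)^k / k! times the initial error. -/
theorem stmt_15 (a b c d T : ℝ) (hT : 0 < T) :
    ∃ C : ℝ, 0 < C ∧
      ∀ (f g : ℝ → ℝ), ContinuousOn f (Icc 0 T) → ContinuousOn g (Icc 0 T) →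
      ∀ (x y : ℝ → ℝ),
        (∀ t ∈ Icc 0 T, HasDerivAt x (a * x t + b * y t + f t) t) →
        (∀ t ∈ Icc 0 T, HasDerivAt y (c * x t + d * y t + g t) t) →
      ∀ (X Y : ℕ → ℝ → ℝ),
        (∀ k, ContinuousOn (X k) (Icc 0 T)) →
        (∀ k, ContinuousOn (Y k) (Icc 0 T)) →
        (∀ k, ∀ t ∈ Icc 0 T, X (k + 1) t
          = x 0 + ∫ τ in (0:ℝ)..t, (a * X (k + 1) τ + b * Y k τ + f τ)) →
        (∀ k, ∀ t ∈ Icc 0 T, Y (k + 1) t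
          = y 0 + ∫ τ in (0:ℝ)..t, (c * X (k + 1) τ + d * Y k τ + g τ)) →
      ∀ B : ℝ,
        (∀ t ∈ Icc 0 T, max |X 0 t - x t| |Y 0 t - y t| ≤ B) →
        ∀ k, ∀ t ∈ Icc 0 T,
          max |X k t - x t| |Y k t - y t|
            ≤ (C * T) ^ k / (Nat.factorial k) * B := by
  set C := gaussSeidelConstant a b c d T
  have hC : 0 < C := gaussSeidelConstant_pos hT.le
  refine ⟨C, hC, ?_⟩
  intro f g hf hg x y hx hy X Y hX hY hX_eq hY_eq B hB k t ht
  have hxc : ContinuousOn x (Icc 0 T) := fun s hs => (hx s hs).continuousAt.continuousWithinAt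
  have hyc : ContinuousOn y (Icc 0 T) := fun s hs => (hy s hs).continuousAt.continuousWithinAt
  have hB0 : 0 ≤ B := (abs_nonneg _).trans ((le_max_left _ _).trans (hB 0 ⟨le_rfl, hT.le⟩))
  have herr := gaussSeidel_error_le hT.le hB0
    (ex := fun k t => X k t - x t) (ey := fun k t => Y k t - y t)
    (fun k => (hX k).sub hxc) (fun s hs => max_le_iff.1 (hB s hs))
    (fun k => sub_eq_integral_of_hasDerivAt (hX (k + 1)) (hY k) hxc hyc hf (hX_eq k) hx)
    (fun k => sub_eq_integral_of_hasDerivAt (hX (k + 1)) (hY k) hxc hyc hg (hY_eq k) hy) k t ht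
  calc max |X k t - x t| |Y k t - y t|
      ≤ B * (C * t) ^ k / k.factorial := max_le herr.1 herr.2
    _ ≤ B * (C * T) ^ k / k.factorial := by have := ht.1; gcongr; exact ht.2
    _ = (C * T) ^ k / k.factorial * B := by ring
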